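/- arXiv:1611.07108 — 5 statements merged into one kernel-verified Lean document; each statement's English description precedes it below -/
import Mathlib

section
/- Let f : ℝ^n → ℝ^m be continuous. If f is proper at the sublevel t̄ ∈ ℝ^m (i.e., for every compact A ⊆ t̄ - ℝ^m_+ the preimage f⁻¹(A) is compact), then the section [f(ℝ^n)]_{t̄} = f(ℝ^n) ∩ (t̄ - ℝ^m_+) is a closed subset of ℝ^m. -/
/-- If a continuous `f : ℝ^n → ℝ^m` is proper at the sublevel `t̄` (preimages of
compact subsets of `t̄ - ℝ^m_+` are compact), then the section
`[f(ℝ^n)]_{t̄} = f(ℝ^n) ∩ (t̄ - ℝ^m_+)` is closed. -/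
theorem stmt_2 {n m : ℕ} (f : EuclideanSpace ℝ (Fin n) → (Fin m → ℝ))
    (tbar : Fin m → ℝ) (hf : Continuous f)
    (hproper : ∀ A : Set (Fin m → ℝ), IsCompact A → A ⊆ {t | t ≤ tbar} →
      IsCompact (f ⁻¹' A)) :
    IsClosed {y | y ∈ Set.range f ∧ y ≤ tbar} := by
  apply IsSeqClosed.isClosed
  intro u y hu hlim
  have hyle : y ≤ tbar :=
    isClosed_Iic.mem_of_tendsto hlim (Filter.Eventually.of_forall fun k => (hu k).2)
  -- choose preimages
  choose x hx using fun k => (hu k).1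
  -- the compact set A = {y} ∪ range u
  have hA : IsCompact (insert y (Set.range u)) := hlim.isCompact_insert_range
  have hAsub : insert y (Set.range u) ⊆ {t | t ≤ tbar} := by
    rintro t (rfl | ⟨k, rfl⟩)
    · exact hyle
    · exact (hu k).2
  have hK : IsCompact (f ⁻¹' insert y (Set.range u)) := hproper _ hA hAsub
  have hxK : ∀ k, x k ∈ f ⁻¹' insert y (Set.range u) := fun k => by
    simp only [Set.mem_preimage, hx k]
    exact Set.mem_insert_iff.mpr (Or.inr ⟨k, rfl⟩)
  obtain ⟨x0, -, φ, hφ, hφlim⟩ := hK.tendsto_subseq hxK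
  have hfx0 : Filter.Tendsto (fun j => f (x (φ j))) Filter.atTop (nhds (f x0)) :=
    (hf.continuousAt.tendsto).comp hφlim
  have huy : Filter.Tendsto (fun j => u (φ j)) Filter.atTop (nhds y) :=
    hlim.comp hφ.tendsto_atTop
  have : f x0 = y := by
    apply tendsto_nhds_unique _ huy
    simpa only [hx] using hfx0
  exact ⟨⟨x0, this⟩, hyle⟩
end

section
/- Let f : ℝ^n → ℝ^m be continuous. Suppose there exists t̄ ∈ f(ℝ^n) such that f is proper at the sublevel t̄ and the section [f(ℝ^n)]_{t̄} is bounded. Then the problem Min_{ℝ^m_+} {f(x) | x ∈ ℝ^n} admits a Pareto solution, i.e., there exists x* ∈ ℝ^n such that no x ∈ ℝ^n satisfies f(x) ≤ f(x*) and f(x) ≠ f(x*). -/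
/-- If `f : ℝ^n → ℝ^m` is continuous, proper at a sublevel `t̄ ∈ f(ℝ^n)`, and the
section `[f(ℝ^n)]_{t̄}` is bounded, then the problem `Min_{ℝ^m_+} {f x | x ∈ ℝ^n}`
admits a Pareto solution. -/
theorem stmt_3 {n m : ℕ} (f : EuclideanSpace ℝ (Fin n) → (Fin m → ℝ))
    (hf : Continuous f) (tbar : Fin m → ℝ) (htbar : tbar ∈ Set.range f)
    (hproper : ∀ A : Set (Fin m → ℝ), IsCompact A → A ⊆ {t | t ≤ tbar} →
      IsCompact (f ⁻¹' A))
    (hbdd : ∃ a : Fin m → ℝ, ∀ y ∈ Set.range f ∩ {y | y ≤ tbar}, a ≤ y) :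
    ∃ xstar : EuclideanSpace ℝ (Fin n),
      ∀ x, f x ≤ f xstar → f x = f xstar := by
  obtain ⟨a, ha⟩ := hbdd
  obtain ⟨x0, hx0⟩ := htbar
  set K : Set (EuclideanSpace ℝ (Fin n)) := f ⁻¹' (Set.Icc a tbar) with hK
  have hKcomp : IsCompact K := hproper _ isCompact_Icc (fun t ht => ht.2)
  have hx0K : x0 ∈ K := by
    refine ⟨?_, ?_⟩
    · rw [hx0]
      exact ha tbar ⟨⟨x0, hx0⟩, Set.mem_setOf.mpr le_rfl⟩
    · rw [hx0]
  have hg : Continuous (fun x => ∑ i, f x i) :=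
    continuous_finset_sum _ fun i _ => (continuous_apply i).comp hf
  obtain ⟨xstar, hxK, hmin⟩ := hKcomp.exists_isMinOn ⟨x0, hx0K⟩ hg.continuousOn
  refine ⟨xstar, fun x hx => ?_⟩
  have hfx_le_tbar : f x ≤ tbar := le_trans hx hxK.2
  have hxmem : x ∈ K := ⟨ha (f x) ⟨⟨x, rfl⟩, hfx_le_tbar⟩, hfx_le_tbar⟩
  have hsum : ∑ i, f xstar i ≤ ∑ i, f x i := hmin hxmem
  have hsum' : ∑ i, f x i ≤ ∑ i, f xstar i :=
    Finset.sum_le_sum (fun i _ => hx i)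
  have heq : ∑ i, f x i = ∑ i, f xstar i := le_antisymm hsum' hsum
  funext i
  by_contra hne
  have hlt : f x i < f xstar i := lt_of_le_of_ne (hx i) hne
  have : ∑ j, f x j < ∑ j, f xstar j :=
    Finset.sum_lt_sum (fun j _ => hx j) ⟨i, Finset.mem_univ i, hlt⟩
  exact absurd heq (ne_of_lt this)
end

section
/- Let f : ℝ³ → ℝ² be f(x₁, x₂, x₃) = (x₃, x₁² + (x₁x₂ - 1)² + x₃²). Then the image f(ℝ³) equals the open set {(t₁, t₂) ∈ ℝ² : t₂ > t₁²}, and consequently the problem Min_{ℝ²_+} {f(x) : x ∈ ℝ³} has no Pareto solution and no weak Pareto solution. -/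
/-!
The third coordinate of `f` is free, and `x₁² + (x₁x₂ - 1)²` is never zero but takes every
positive value (take `x₁ = √s`, `x₂ = 1/x₁`), so the image is exactly the open set `t₁² < t₂`.
A point of an open subset of `ℝ^ι` can be pushed down by a small `ε` in every coordinate while
staying in the set, so no value of `f` is even weakly minimal.
-/

open Filter Topology

lemma IsOpen.exists_forall_lt {ι : Type*} {U : Set (ι → ℝ)} (hU : IsOpen U) {t : ι → ℝ}
    (ht : t ∈ U) : ∃ s ∈ U, ∀ i, s i < t i := by
  have hshift : Tendsto (fun ε : ℝ => t - Function.const ι ε) (𝓝[>] 0) (𝓝 t) := by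
    have : Continuous fun ε : ℝ => t - Function.const ι ε := by fun_prop
    simpa using (this.tendsto 0).mono_left nhdsWithin_le_nhds
  obtain ⟨ε, hεU, hε⟩ :=
    ((hshift.eventually (hU.mem_nhds ht)).and self_mem_nhdsWithin).exists
  exact ⟨_, hεU, fun i => by simpa using hε⟩

lemma sq_lt_sq_add_sq_add_sq (a b c : ℝ) : c ^ 2 < a ^ 2 + (a * b - 1) ^ 2 + c ^ 2 := by
  rcases eq_or_ne a 0 with rfl | ha
  · norm_num
  · nlinarith [sq_nonneg (a * b - 1), pow_pos (abs_pos.mpr ha) 2, sq_abs a]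

lemma exists_sq_add_sq_add_sq_eq {c t : ℝ} (h : c ^ 2 < t) :
    ∃ a b : ℝ, a ^ 2 + (a * b - 1) ^ 2 + c ^ 2 = t := by
  have hpos : 0 < t - c ^ 2 := sub_pos.mpr h
  have ha : 0 < √(t - c ^ 2) := Real.sqrt_pos.mpr hpos
  refine ⟨√(t - c ^ 2), (√(t - c ^ 2))⁻¹, ?_⟩
  rw [mul_inv_cancel₀ ha.ne', Real.sq_sqrt hpos.le]
  ring

/-- For `f(x₁,x₂,x₃) = (x₃, x₁² + (x₁x₂ - 1)² + x₃²)`, the image of `f` is the open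
set `{t : t₂ > t₁²}`, and the problem `Min_{ℝ²_+} {f x : x ∈ ℝ³}` has no Pareto
solution and no weak Pareto solution. -/
theorem stmt_13 (f : EuclideanSpace ℝ (Fin 3) → (Fin 2 → ℝ))
    (hf : ∀ x, f x = ![x 2, (x 0) ^ 2 + (x 0 * x 1 - 1) ^ 2 + (x 2) ^ 2]) :
    Set.range f = {t : Fin 2 → ℝ | (t 0) ^ 2 < t 1} ∧
      (¬ ∃ xstar, ∀ x, f x ≤ f xstar → f x = f xstar) ∧
      (¬ ∃ xstar, ∀ x, ¬ (∀ i, f x i < f xstar i)) := by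
  have hrange : Set.range f = {t : Fin 2 → ℝ | (t 0) ^ 2 < t 1} := by
    ext t
    constructor
    · rintro ⟨x, rfl⟩
      simpa [hf] using sq_lt_sq_add_sq_add_sq (x 0) (x 1) (x 2)
    · intro ht
      obtain ⟨a, b, hab⟩ := exists_sq_add_sq_add_sq_eq ht
      refine ⟨WithLp.toLp 2 ![a, b, t 0], ?_⟩
      ext i
      fin_cases i <;> simp [hf, hab]
  have hopen : IsOpen (Set.range f) := hrange ▸ isOpen_lt (by fun_prop) (by fun_prop)
  have below : ∀ xstar, ∃ x, ∀ i, f x i < f xstar i := fun xstar => by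
    obtain ⟨_, ⟨x, rfl⟩, hx⟩ := hopen.exists_forall_lt (Set.mem_range_self xstar)
    exact ⟨x, hx⟩
  refine ⟨hrange, ?_, ?_⟩
  · rintro ⟨xstar, hmin⟩
    obtain ⟨x, hx⟩ := below xstar
    exact (hx 0).ne (congrFun (hmin x fun i => (hx i).le) 0)
  · rintro ⟨xstar, hmin⟩
    obtain ⟨x, hx⟩ := below xstar
    exact hmin x hx
end

section
/- Let M be the Motzkin polynomial M(x₁,x₂) = x₁²x₂⁴ + x₁⁴x₂² - 3x₁²x₂² + 1. Then the level set M⁻¹(1) = {x₁ = 0} ∪ {x₂ = 0} ∪ {x₁² + x₂² = 3} is unbounded, hence M is not proper at any sublevel t̄ ≥ 1; while for every t̄ < 1, M is proper at the sublevel t̄ (i.e., the sublevel set {x : M(x) ≤ t̄} is compact). -/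
/-! Everything follows from the factorisation `M x - 1 = x₁² x₂² (x₁² + x₂² - 3)`.
It gives the level set `M⁻¹(1)`, which contains both coordinate axes and is therefore
unbounded, so `M⁻¹{1}` is not compact. Where `M < 1` the last factor must be negative,
so each sublevel set below `1` is closed and lies in the disk `x₁² + x₂² < 3`. -/

open Set

section Proper

variable {X : Type*} [TopologicalSpace X] {g : X → ℝ} {t : ℝ}

theorem isCompact_preimage_of_isCompact_sublevel (hg : Continuous g)
    (ht : IsCompact {x | g x ≤ t}) {A : Set ℝ} (hA : IsCompact A) (hAt : A ⊆ Iic t) :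
    IsCompact (g ⁻¹' A) :=
  ht.of_isClosed_subset (hA.isClosed.preimage hg) fun _ hx => hAt hx

end Proper

def motzkin (p : ℝ × ℝ) : ℝ :=
  p.1 ^ 2 * p.2 ^ 4 + p.1 ^ 4 * p.2 ^ 2 - 3 * p.1 ^ 2 * p.2 ^ 2 + 1

namespace Motzkin

theorem continuous : Continuous motzkin := by
  unfold motzkin; fun_prop

theorem sub_one (p : ℝ × ℝ) :
    motzkin p - 1 = p.1 ^ 2 * p.2 ^ 2 * (p.1 ^ 2 + p.2 ^ 2 - 3) := by
  unfold motzkin; ring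

theorem eq_one_iff (p : ℝ × ℝ) :
    motzkin p = 1 ↔ p.1 = 0 ∨ p.2 = 0 ∨ p.1 ^ 2 + p.2 ^ 2 = 3 := by
  rw [← sub_eq_zero, sub_one, mul_eq_zero, mul_eq_zero, sub_eq_zero,
    pow_eq_zero_iff two_ne_zero, pow_eq_zero_iff two_ne_zero, or_assoc]

theorem level_one :
    {p : ℝ × ℝ | motzkin p = 1} =
      {p | p.1 = 0} ∪ {p | p.2 = 0} ∪ {p | p.1 ^ 2 + p.2 ^ 2 = 3} := by
  ext p
  exact (eq_one_iff p).trans or_assoc.symm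

theorem not_isBounded_level_one : ¬ Bornology.IsBounded {p : ℝ × ℝ | motzkin p = 1} := by
  intro hbdd
  have haxis : ({0} : Set ℝ) ×ˢ (univ : Set ℝ) ⊆ {p | motzkin p = 1} := by
    rintro p ⟨hp, -⟩
    exact (eq_one_iff p).2 (Or.inl hp)
  have hprod := (Bornology.isBounded_prod_of_nonempty (s := {(0 : ℝ)}) (t := univ)
    ⟨(0, 0), rfl, trivial⟩).1 (hbdd.subset haxis)
  exact NormedSpace.unbounded_univ ℝ ℝ hprod.2

theorem sum_sq_lt_three_of_lt_one {p : ℝ × ℝ} (hp : motzkin p < 1) :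
    p.1 ^ 2 + p.2 ^ 2 < 3 := by
  have hneg : p.1 ^ 2 * p.2 ^ 2 * (p.1 ^ 2 + p.2 ^ 2 - 3) < 0 := by
    linarith [sub_one p]
  have := neg_of_mul_neg_right hneg (by positivity)
  linarith

theorem isCompact_sublevel {t : ℝ} (ht : t < 1) : IsCompact {p : ℝ × ℝ | motzkin p ≤ t} := by
  have hsub : {p : ℝ × ℝ | motzkin p ≤ t} ⊆ Icc (-2) 2 ×ˢ Icc (-2) 2 := by
    intro p hp
    have hr := sum_sq_lt_three_of_lt_one (lt_of_le_of_lt hp ht)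
    exact ⟨abs_le_of_sq_le_sq' (by nlinarith [sq_nonneg p.2]) zero_le_two,
      abs_le_of_sq_le_sq' (by nlinarith [sq_nonneg p.1]) zero_le_two⟩
  exact (isCompact_Icc.prod isCompact_Icc).of_isClosed_subset
    (isClosed_le continuous continuous_const) hsub

end Motzkin

/-- For the Motzkin polynomial `M`, the level set `M⁻¹(1)` equals
`{x₁ = 0} ∪ {x₂ = 0} ∪ {x₁² + x₂² = 3}` and is unbounded; hence `M` is not proper
at any sublevel `t̄ ≥ 1`, while for every `t̄ < 1` the map `M` is proper at the
sublevel `t̄` (the sublevel set is compact). -/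
theorem stmt_15 (M : ℝ × ℝ → ℝ)
    (hM : ∀ p : ℝ × ℝ,
      M p = p.1 ^ 2 * p.2 ^ 4 + p.1 ^ 4 * p.2 ^ 2 - 3 * p.1 ^ 2 * p.2 ^ 2 + 1) :
    {p : ℝ × ℝ | M p = 1} =
        {p | p.1 = 0} ∪ {p | p.2 = 0} ∪ {p | p.1 ^ 2 + p.2 ^ 2 = 3} ∧
      ¬ Bornology.IsBounded {p : ℝ × ℝ | M p = 1} ∧
      (∀ tb : ℝ, 1 ≤ tb →
        ∃ A : Set ℝ, IsCompact A ∧ A ⊆ Set.Iic tb ∧ ¬ IsCompact (M ⁻¹' A)) ∧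
      (∀ tb : ℝ, tb < 1 →
        (∀ A : Set ℝ, IsCompact A → A ⊆ Set.Iic tb → IsCompact (M ⁻¹' A)) ∧
          IsCompact {p : ℝ × ℝ | M p ≤ tb}) := by
  obtain rfl : M = motzkin := funext hM
  refine ⟨Motzkin.level_one, Motzkin.not_isBounded_level_one, fun tb htb => ?_,
    fun tb htb => ⟨fun A hA hAt => ?_, Motzkin.isCompact_sublevel htb⟩⟩
  · exact ⟨{1}, isCompact_singleton, singleton_subset_iff.2 htb,
      fun hcpt => Motzkin.not_isBounded_level_one hcpt.isBounded⟩
  · exact isCompact_preimage_of_isCompact_sublevel Motzkin.continuous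
      (Motzkin.isCompact_sublevel htb) hA hAt
end

section
/- Let f : ℝ² → ℝ², f(x₁,x₂) = (x₁² + x₂², x₁² - x₂²). Then f is proper (hence satisfies the Palais–Smale condition), but f does not satisfy the (RSPS) condition: the sequence x^k = (k, 0) satisfies ν_f(x^k) = 0 and f(x^k) ∈ ℝ²_+ for all k, yet has no convergent subsequence. -/
open Filter

/-! Properness comes from coercivity: `‖x‖² = f₁(x) ≤ ‖f(x)‖`. On the `x₁`-axis both components
have the same gradient `2x`, so the combination with `λ = (1/2, -1/2)` vanishes and `ν_f = 0`
there, while `(k, 0)` escapes to infinity. -/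

/-- The Rabier function `ν_f(x) = inf {‖Σ λ_i ∇f_i(x)‖ : Σ |λ_i| = 1}`. -/
noncomputable def rabier {n m : ℕ} (f : EuclideanSpace ℝ (Fin n) → (Fin m → ℝ))
    (x : EuclideanSpace ℝ (Fin n)) : ℝ :=
  sInf {r : ℝ | ∃ l : Fin m → ℝ, (∑ i, |l i|) = 1 ∧
    r = ‖∑ i, l i • gradient (fun y => f y i) x‖}

lemma rabier_eq_zero_of_gradient_eq {n m : ℕ} (f : EuclideanSpace ℝ (Fin n) → (Fin m → ℝ))
    (x : EuclideanSpace ℝ (Fin n)) {i j : Fin m} (hij : i ≠ j)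
    (h : gradient (fun y => f y i) x = gradient (fun y => f y j) x) : rabier f x = 0 := by
  set l : Fin m → ℝ := Pi.single i (1 / 2) + Pi.single j (-1 / 2)
  have hl_off : ∀ k, k ≠ i ∧ k ≠ j → l k = 0 := fun k hk => by simp [l, hk.1, hk.2]
  have hli : l i = 1 / 2 := by simp [l, hij]
  have hlj : l j = -1 / 2 := by simp [l, hij.symm]
  have hzero : (0 : ℝ) ∈ {r : ℝ | ∃ l : Fin m → ℝ, (∑ i, |l i|) = 1 ∧
      r = ‖∑ i, l i • gradient (fun y => f y i) x‖} := by
    refine ⟨l, ?_, ?_⟩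
    · rw [Fintype.sum_eq_add i j hij fun k hk => by simp [hl_off k hk], hli, hlj]
      norm_num [abs_of_neg]
    · rw [Fintype.sum_eq_add i j hij fun k hk => by simp [hl_off k hk], hli, hlj, h, ← add_smul]
      norm_num
  refine le_antisymm (csInf_le ⟨0, ?_⟩ hzero) (Real.sInf_nonneg ?_) <;>
    rintro r ⟨l, -, rfl⟩ <;> exact norm_nonneg _

open InnerProductSpace in
lemma hasGradientAt_sum_mul_sq {ι : Type*} [Fintype ι] (c : ι → ℝ) (x : EuclideanSpace ℝ ι) :
    HasGradientAt (fun y : EuclideanSpace ℝ ι => ∑ i, c i * y i ^ 2)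
      (WithLp.toLp 2 fun i => 2 * c i * x i) x := by
  rw [hasGradientAt_iff_hasFDerivAt]
  have hterm (i : ι) :=
    (((EuclideanSpace.proj i : EuclideanSpace ℝ ι →L[ℝ] ℝ).hasFDerivAt (x := x)).pow 2).const_mul
      (c i)
  refine (HasFDerivAt.fun_sum fun i _ => hterm i).congr_fderiv ?_
  ext z
  simp [PiLp.inner_apply, mul_comm, mul_assoc]

lemma gradient_sq_add_sq_eq_gradient_sq_sub_sq {p : EuclideanSpace ℝ (Fin 2)} (hp : p 1 = 0) :
    gradient (fun y : EuclideanSpace ℝ (Fin 2) => y 0 ^ 2 + y 1 ^ 2) p =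
      gradient (fun y : EuclideanSpace ℝ (Fin 2) => y 0 ^ 2 - y 1 ^ 2) p := by
  have hadd := hasGradientAt_sum_mul_sq ![1, 1] p
  have hsub := hasGradientAt_sum_mul_sq ![1, -1] p
  simp only [Fin.sum_univ_two, Matrix.cons_val_zero, Matrix.cons_val_one, one_mul, neg_one_mul,
    ← sub_eq_add_neg] at hadd hsub
  rw [hadd.gradient, hsub.gradient]
  ext i
  fin_cases i <;> simp [hp]

lemma isProperMap_of_tendsto_atTop_le_norm {E F : Type*} [NormedAddCommGroup E] [ProperSpace E]
    [NormedAddCommGroup F] [ProperSpace F] {f : E → F} (hf : Continuous f) {g : ℝ → ℝ}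
    (hg : Tendsto g atTop atTop) (h : ∀ x, g ‖x‖ ≤ ‖f x‖) : IsProperMap f := by
  refine isProperMap_iff_tendsto_cocompact.mpr ⟨hf, ?_⟩
  rw [← Metric.cobounded_eq_cocompact, ← Metric.cobounded_eq_cocompact,
    ← tendsto_norm_atTop_iff_cobounded]
  exact tendsto_atTop_mono h (hg.comp tendsto_norm_cobounded_atTop)

/-- The map `f(x₁,x₂) = (x₁² + x₂², x₁² - x₂²)` is proper (hence satisfies the
Palais–Smale condition), but fails the (RSPS) condition: the sequence
`x^k = (k, 0)` satisfies `ν_f(x^k) = 0` and `f(x^k) ∈ ℝ²_+` for all `k`, yet has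
no convergent subsequence. -/
theorem stmt_17 (f : EuclideanSpace ℝ (Fin 2) → (Fin 2 → ℝ))
    (hf : ∀ x, f x = ![(x 0) ^ 2 + (x 1) ^ 2, (x 0) ^ 2 - (x 1) ^ 2])
    (x : ℕ → EuclideanSpace ℝ (Fin 2))
    (hx : ∀ k i, x k i = if i = 0 then (k : ℝ) else 0) :
    (∀ A : Set (Fin 2 → ℝ), IsCompact A → IsCompact (f ⁻¹' A)) ∧
      (∀ k, rabier f (x k) = 0) ∧
      (∀ k, (0 : Fin 2 → ℝ) ≤ f (x k)) ∧
      (∀ φ : ℕ → ℕ, StrictMono φ →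
        ¬ ∃ y : EuclideanSpace ℝ (Fin 2),
            Tendsto (fun j => x (φ j)) atTop (nhds y)) := by
  obtain rfl : f = fun y => ![y 0 ^ 2 + y 1 ^ 2, y 0 ^ 2 - y 1 ^ 2] := funext hf
  obtain rfl : x = fun k : ℕ => EuclideanSpace.single (0 : Fin 2) (k : ℝ) := by
    ext k i; simp [hx]
  refine ⟨fun A hA => ?_, fun k => ?_, fun k => ?_, ?_⟩
  · refine (isProperMap_of_tendsto_atTop_le_norm (by fun_prop) (tendsto_pow_atTop two_ne_zero)
      fun y => ?_).isCompact_preimage hA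
    calc ‖y‖ ^ 2 = y 0 ^ 2 + y 1 ^ 2 := by
          simp [EuclideanSpace.real_norm_sq_eq, Fin.sum_univ_two]
      _ ≤ ‖(![y 0 ^ 2 + y 1 ^ 2, y 0 ^ 2 - y 1 ^ 2] : Fin 2 → ℝ) 0‖ := by simp [le_abs_self]
      _ ≤ _ := norm_le_pi_norm _ 0
  · exact rabier_eq_zero_of_gradient_eq _ _ zero_ne_one
      (gradient_sq_add_sq_eq_gradient_sq_sub_sq (by simp))
  · intro i; fin_cases i <;> simp
  · rintro φ hφ ⟨y, hy⟩
    have hnorm :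
        Tendsto (fun j => ‖EuclideanSpace.single (0 : Fin 2) (φ j : ℝ)‖) atTop atTop := by
      simpa [Function.comp_def] using tendsto_natCast_atTop_atTop.comp hφ.tendsto_atTop
    exact not_tendsto_nhds_of_tendsto_atTop hnorm _ hy.norm
end
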